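/- Let E and R be types, freq : E → ℕ, g : ℕ → ℝ, and let U_sem(h, r, t) = (g(freq h) + g(freq t))/2 be the semantic uncertainty. Let D_novel and D_ID be finite nonempty sets of triples. If there exists a bijection φ : D_novel → D_ID such that for every x = (h, r, t) ∈ D_novel with φ(x) = (h', r', t') one has freq h = freq h' and freq t = freq t', then AUROC½(U_sem, D_novel, D_ID) = 1/2: semantic uncertainty is exactly at chance level on novel-context out-of-distribution triples. -/

import Mathlib

open Finset

/-- Strict AUROC: `(1/(|O|·|I|)) · ∑_{x ∈ O} ∑_{y ∈ I} 1[U x > U y]`. -/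
noncomputable def aurocStrict {T : Type*} (U : T → ℝ) (O I : Finset T) : ℝ :=
  (1 / ((O.card : ℝ) * (I.card : ℝ))) *
    ∑ x ∈ O, ∑ y ∈ I, (if U x > U y then (1 : ℝ) else 0)

/-- Tie-corrected AUROC:
`(1/(|O|·|I|)) · ∑_{x ∈ O} ∑_{y ∈ I} (1[U x > U y] + (1/2)·1[U x = U y])`. -/
noncomputable def aurocHalf {T : Type*} (U : T → ℝ) (O I : Finset T) : ℝ :=
  (1 / ((O.card : ℝ) * (I.card : ℝ))) *
    ∑ x ∈ O, ∑ y ∈ I,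
      ((if U x > U y then (1 : ℝ) else 0) + (1 / 2) * (if U x = U y then (1 : ℝ) else 0))

/-
A frequency-preserving bijection `φ : D_novel → D_ID` preserves `U_sem`, so reindexing the
in-distribution sample along `φ` turns `AUROC½(U_sem, D_novel, D_ID)` into
`AUROC½(U_sem, D_novel, D_novel)`. Comparing a sample with itself is at chance level: the
tie-corrected indicator satisfies `k(a, b) + k(b, a) = 1`, so swapping the two summation
variables shows that twice the sum is `|D_novel|²`.
-/

noncomputable def tieCorrectedGt (a b : ℝ) : ℝ :=
  (if a > b then 1 else 0) + 1 / 2 * (if a = b then 1 else 0)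

theorem tieCorrectedGt_add_swap (a b : ℝ) : tieCorrectedGt a b + tieCorrectedGt b a = 1 := by
  rcases lt_trichotomy a b with h | rfl | h
  · simp [tieCorrectedGt, h, h.ne, h.ne', not_lt.mpr h.le]
  · norm_num [tieCorrectedGt]
  · simp [tieCorrectedGt, h, h.ne, h.ne', not_lt.mpr h.le]

section

variable {T : Type*} (U : T → ℝ)

theorem aurocHalf_eq_sum_tieCorrectedGt (O I : Finset T) :
    aurocHalf U O I = 1 / (#O * #I) * ∑ x ∈ O, ∑ y ∈ I, tieCorrectedGt (U x) (U y) :=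
  rfl

theorem aurocHalf_add_aurocHalf_swap {O I : Finset T} (hO : O.Nonempty) (hI : I.Nonempty) :
    aurocHalf U O I + aurocHalf U I O = 1 := by
  have hpairs : ∑ x ∈ O, ∑ y ∈ I, (tieCorrectedGt (U x) (U y) + tieCorrectedGt (U y) (U x))
      = #O * #I := by
    simp only [tieCorrectedGt_add_swap, sum_const, nsmul_eq_mul, mul_one]
  rw [aurocHalf_eq_sum_tieCorrectedGt, aurocHalf_eq_sum_tieCorrectedGt, sum_comm (s := I),
    mul_comm (#I : ℝ), ← mul_add, ← sum_add_distrib]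
  simp only [← sum_add_distrib]
  rw [hpairs, one_div_mul_cancel]
  exact mul_ne_zero (Nat.cast_ne_zero.mpr hO.card_pos.ne') (Nat.cast_ne_zero.mpr hI.card_pos.ne')

theorem aurocHalf_self {S : Finset T} (hS : S.Nonempty) : aurocHalf U S S = 1 / 2 := by
  linarith [aurocHalf_add_aurocHalf_swap U hS hS]

theorem aurocHalf_eq_of_bijOn {O I J : Finset T} {φ : T → T} (hφ : Set.BijOn φ I J)
    (hU : ∀ y ∈ I, U (φ y) = U y) : aurocHalf U O J = aurocHalf U O I := by
  have hcard : #I = #J := card_nbij φ hφ.mapsTo hφ.injOn hφ.surjOn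
  have hinner : ∀ x, ∑ y ∈ I, tieCorrectedGt (U x) (U y) = ∑ y ∈ J, tieCorrectedGt (U x) (U y) :=
    fun x => sum_nbij φ (fun y hy => hφ.mapsTo hy) hφ.injOn hφ.surjOn fun y hy => by rw [hU y hy]
  simp only [aurocHalf_eq_sum_tieCorrectedGt, hcard, hinner]

end

theorem semantic_aurocHalf_eq_half_general
    {E R : Type*} (freq : E → ℕ) (g : ℕ → ℝ)
    (Usem : E × R × E → ℝ)
    (hUsem : ∀ h r t, Usem (h, r, t) = (g (freq h) + g (freq t)) / 2)
    (Dnovel DID : Finset (E × R × E))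
    (hnovel : Dnovel.Nonempty)
    (φ : E × R × E → E × R × E)
    (hbij : Set.BijOn φ ↑Dnovel ↑DID)
    (hfreq : ∀ x ∈ Dnovel, freq (φ x).1 = freq x.1 ∧ freq (φ x).2.2 = freq x.2.2) :
    aurocHalf Usem Dnovel DID = 1 / 2 := by
  have hUsem_φ : ∀ x ∈ Dnovel, Usem (φ x) = Usem x := by
    intro x hx
    obtain ⟨hhead, htail⟩ := hfreq x hx
    rw [hUsem, hUsem, hhead, htail]
  rw [aurocHalf_eq_of_bijOn Usem hbij hUsem_φ, aurocHalf_self Usem hnovel]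

/-- Semantic uncertainty `U_sem(h,r,t) = (g(freq h) + g(freq t))/2`
achieves tie-corrected AUROC exactly `1/2` on novel contexts whenever there is a
frequency-preserving bijection from `D_novel` onto `D_ID`. -/
theorem semantic_aurocHalf_eq_half
    {E R : Type*} (freq : E → ℕ) (g : ℕ → ℝ)
    (Usem : E × R × E → ℝ)
    (hUsem : ∀ h r t, Usem (h, r, t) = (g (freq h) + g (freq t)) / 2)
    (Dnovel DID : Finset (E × R × E))
    (hnovel : Dnovel.Nonempty) (hid : DID.Nonempty)
    (φ : E × R × E → E × R × E)
    (hbij : Set.BijOn φ ↑Dnovel ↑DID)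
    (hfreq : ∀ x ∈ Dnovel, freq (φ x).1 = freq x.1 ∧ freq (φ x).2.2 = freq x.2.2) :
    aurocHalf Usem Dnovel DID = 1 / 2 :=
  semantic_aurocHalf_eq_half_general freq g Usem hUsem Dnovel DID hnovel φ hbij hfreq
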